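/- Let Λ be a type, q ∈ ℝ with |q| < 1, and ρ ≥ 0. Then for every word w ∈ List Λ of length n, the Wick polynomial satisfies ‖ψ(w)‖_ρ ≤ (ρ + 2/(1−|q|))ⁿ. (This is the estimate, derived in the proof of the paper's Corollary on Ξ_q, that ‖ψ_{\underline{j}}(Y₁,…,Y_N)‖_ρ ≤ (ρ + 2/(1−|q|))ⁿ for the weighted ℓ¹-norm of coefficients of noncommutative power series.) -/

import Mathlib

namespace WickAux
variable {Λ : Type*}

noncomputable def mn (ρ : ℝ) (f : MonoidAlgebra ℂ (FreeMonoid Λ)) : ℝ :=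
  ∑ v ∈ f.coeff.support, ‖f.coeff v‖ * ρ ^ v.toList.length

lemma mn_eq_sum {ρ : ℝ} (f : MonoidAlgebra ℂ (FreeMonoid Λ)) {s : Finset (FreeMonoid Λ)}
    (hs : f.coeff.support ⊆ s) : mn ρ f = ∑ v ∈ s, ‖f.coeff v‖ * ρ ^ v.toList.length := by
  refine Finset.sum_subset hs fun v _ hv => ?_
  simp [Finsupp.notMem_support_iff.mp hv]

lemma mn_nonneg {ρ : ℝ} (hρ : 0 ≤ ρ) (f : MonoidAlgebra ℂ (FreeMonoid Λ)) : 0 ≤ mn ρ f :=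
  Finset.sum_nonneg fun v _ => mul_nonneg (norm_nonneg _) (pow_nonneg hρ _)

lemma mn_zero (ρ : ℝ) : mn ρ (0 : MonoidAlgebra ℂ (FreeMonoid Λ)) = 0 := by simp [mn]

lemma mn_add_le {ρ : ℝ} (hρ : 0 ≤ ρ) (f g : MonoidAlgebra ℂ (FreeMonoid Λ)) :
    mn ρ (f + g) ≤ mn ρ f + mn ρ g := by
  classical
  rw [mn_eq_sum (f + g) Finsupp.support_add,
    mn_eq_sum f Finset.subset_union_left, mn_eq_sum g Finset.subset_union_right,
    ← Finset.sum_add_distrib]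
  refine Finset.sum_le_sum fun v _ => ?_
  rw [← add_mul]
  exact mul_le_mul_of_nonneg_right (norm_add_le _ _) (pow_nonneg hρ _)

lemma mn_neg (ρ : ℝ) (f : MonoidAlgebra ℂ (FreeMonoid Λ)) : mn ρ (-f) = mn ρ f := by
  unfold mn
  rw [MonoidAlgebra.coeff_neg, Finsupp.support_neg]
  refine Finset.sum_congr rfl fun v _ => ?_
  rw [Finsupp.neg_apply, norm_neg]

lemma mn_sub_le {ρ : ℝ} (hρ : 0 ≤ ρ) (f g : MonoidAlgebra ℂ (FreeMonoid Λ)) :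
    mn ρ (f - g) ≤ mn ρ f + mn ρ g := by
  rw [sub_eq_add_neg, ← mn_neg ρ g]
  exact mn_add_le hρ f (-g)

lemma mn_sum_le {ρ : ℝ} (hρ : 0 ≤ ρ) {ι : Type*} (s : Finset ι)
    (g : ι → MonoidAlgebra ℂ (FreeMonoid Λ)) :
    mn ρ (∑ i ∈ s, g i) ≤ ∑ i ∈ s, mn ρ (g i) := by
  classical
  induction s using Finset.induction_on with
  | empty => simp [mn_zero]
  | insert _ _ h ih =>
    rw [Finset.sum_insert h, Finset.sum_insert h]
    exact le_trans (mn_add_le hρ _ _) (by linarith)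

lemma mn_smul (ρ : ℝ) (c : ℂ) (f : MonoidAlgebra ℂ (FreeMonoid Λ)) :
    mn ρ (c • f) = ‖c‖ * mn ρ f := by
  rw [mn_eq_sum (c • f) Finsupp.support_smul, mn, Finset.mul_sum]
  refine Finset.sum_congr rfl fun v _ => ?_
  rw [MonoidAlgebra.coeff_smul, Finsupp.smul_apply, norm_smul, mul_assoc]

lemma mn_single (ρ : ℝ) (v : FreeMonoid Λ) (c : ℂ) :
    mn ρ (MonoidAlgebra.single v c : MonoidAlgebra ℂ (FreeMonoid Λ)) = ‖c‖ * ρ ^ v.toList.length := by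
  by_cases hc : c = 0
  · simp [hc, mn]
  · rw [mn_eq_sum (MonoidAlgebra.single v c) Finsupp.support_single_subset]
    simp

lemma mn_of_mul_le {ρ : ℝ} (hρ : 0 ≤ ρ) (a : Λ) (f : MonoidAlgebra ℂ (FreeMonoid Λ)) :
    mn ρ (MonoidAlgebra.single (FreeMonoid.of a) 1 * f) ≤ ρ * mn ρ f := by
  rw [MonoidAlgebra.mul_def, MonoidAlgebra.coeff_single, Finsupp.sum_single_index (by simp)]
  refine le_trans (mn_sum_le hρ _ _) ?_
  rw [mn, Finset.mul_sum]
  refine Finset.sum_le_sum fun v _ => ?_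
  rw [mn_single, one_mul]
  have h : ((FreeMonoid.of a * v).toList).length = v.toList.length + 1 := by
    simp [FreeMonoid.toList_of_mul]
  rw [h, pow_succ]
  apply le_of_eq
  ring

lemma geom_bound {x : ℝ} (hx0 : 0 ≤ x) (hx : x < 1) (m : ℕ) :
    ∑ i ∈ Finset.range m, x ^ i ≤ 1 / (1 - x) := by
  have h1 : 0 < 1 - x := by linarith
  have e : (x ^ m - 1) / (x - 1) = (1 - x ^ m) / (1 - x) := by
    rw [div_eq_div_iff (by linarith) (by linarith)]; ring
  rw [geom_sum_eq (by linarith) m, e, div_le_div_iff₀ h1 h1]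
  nlinarith [pow_nonneg hx0 m]

end WickAux

/-- The Wick polynomials `ψ : List Λ → FreeAlgebra ℂ Λ`, defined recursively by `ψ([]) = 1` and
`ψ(a :: w) = X_a · ψ(w) − ∑_{j < length w} q^j · [a = w_j] · ψ(w with its j-th letter deleted)`. -/
noncomputable def wick {Λ : Type*} [DecidableEq Λ] (q : ℝ) : List Λ → FreeAlgebra ℂ Λ
  | [] => 1
  | a :: w => FreeAlgebra.ι ℂ a * wick q w -
      ∑ j : Fin w.length,
        ((q : ℂ) ^ (j : ℕ) * (if a = w.get j then 1 else 0)) • wick q (w.eraseIdx j)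
termination_by l => l.length
decreasing_by
  · simp
  · simp [List.length_eraseIdx]

/-- The weighted ℓ¹-norm of coefficients `‖P‖_ρ = ∑_v |P_v| ρ^{length v}`, where `(P_v)` are the
coefficients of `P` in the monomial basis of `FreeAlgebra ℂ Λ` indexed by words
`v : FreeMonoid Λ` (i.e. under the isomorphism with `MonoidAlgebra ℂ (FreeMonoid Λ)`). -/
noncomputable def coeffNorm {Λ : Type*} (ρ : ℝ) (P : FreeAlgebra ℂ Λ) : ℝ :=
  ∑ v ∈ ((FreeAlgebra.basisFreeMonoid ℂ Λ).repr P).support,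
    ‖((FreeAlgebra.basisFreeMonoid ℂ Λ).repr P) v‖ * ρ ^ v.toList.length

lemma coeffNorm_eq {Λ : Type*} (ρ : ℝ) (P : FreeAlgebra ℂ Λ) :
    coeffNorm ρ P
      = WickAux.mn ρ (FreeAlgebra.equivMonoidAlgebraFreeMonoid (R := ℂ) (X := Λ) P) := by
  have h : ((FreeAlgebra.basisFreeMonoid ℂ Λ).repr P)
      = (FreeAlgebra.equivMonoidAlgebraFreeMonoid (R := ℂ) (X := Λ) P).coeff := by
    rfl
  unfold coeffNorm WickAux.mn
  rw [h]

lemma equiv_iota {Λ : Type*} (a : Λ) :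
    FreeAlgebra.equivMonoidAlgebraFreeMonoid (R := ℂ) (X := Λ) (FreeAlgebra.ι ℂ a)
      = MonoidAlgebra.single (FreeMonoid.of a) 1 := by
  simp [FreeAlgebra.equivMonoidAlgebraFreeMonoid]

/-- For `|q| < 1` and `ρ ≥ 0`, every Wick polynomial of a word of length `n` satisfies
`‖ψ(w)‖_ρ ≤ (ρ + 2/(1−|q|))ⁿ`. -/
theorem coeffNorm_wick_le {Λ : Type*} [DecidableEq Λ] (q ρ : ℝ) (hq : |q| < 1) (hρ : 0 ≤ ρ)
    (w : List Λ) :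
    coeffNorm ρ (wick q w) ≤ (ρ + 2 / (1 - |q|)) ^ w.length := by
  have h1q : 0 < 1 - |q| := by linarith
  set C := ρ + 2 / (1 - |q|) with hCdef
  have hC1 : 1 ≤ C := by
    have h2 : (2 : ℝ) ≤ 2 / (1 - |q|) := by
      rw [le_div_iff₀ h1q]; nlinarith [abs_nonneg q]
    simp only [hCdef]; linarith
  have hC0 : (0 : ℝ) ≤ C := by linarith
  generalize hn : w.length = n
  induction n using Nat.strong_induction_on generalizing w with
  | _ n IH =>
    match w, hn with
    | [], hn =>
      simp only [List.length_nil] at hn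
      subst hn
      rw [wick, coeffNorm_eq, map_one, pow_zero]
      have : (1 : MonoidAlgebra ℂ (FreeMonoid Λ)) = MonoidAlgebra.single (1 : FreeMonoid Λ) (1 : ℂ) :=
        rfl
      rw [this, WickAux.mn_single]
      simp
    | a :: t, hn =>
      simp only [List.length_cons] at hn
      subst hn
      rw [wick, coeffNorm_eq, map_sub, map_mul, map_sum, equiv_iota]
      simp only [map_smul]
      refine le_trans (WickAux.mn_sub_le hρ _ _) ?_
      set E := FreeAlgebra.equivMonoidAlgebraFreeMonoid (R := ℂ) (X := Λ)
      have hIH : ∀ u : List Λ, u.length ≤ t.length → coeffNorm ρ (wick q u) ≤ C ^ u.length :=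
        fun u hu => IH u.length (by omega) u rfl
      have h1 : WickAux.mn ρ (MonoidAlgebra.single (FreeMonoid.of a) 1 * E (wick q t))
          ≤ ρ * C ^ t.length := by
        refine le_trans (WickAux.mn_of_mul_le hρ a _) ?_
        have := hIH t le_rfl
        rw [coeffNorm_eq] at this
        exact mul_le_mul_of_nonneg_left this hρ
      have h2 : WickAux.mn ρ (∑ j : Fin t.length,
            ((q : ℂ) ^ (j : ℕ) * (if a = t.get j then 1 else 0)) • E (wick q (t.eraseIdx j)))
          ≤ (1 / (1 - |q|)) * C ^ t.length := by
        refine le_trans (WickAux.mn_sum_le hρ _ _) ?_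
        have hterm : ∀ j : Fin t.length,
            WickAux.mn ρ (((q : ℂ) ^ (j : ℕ) * (if a = t.get j then 1 else 0)) •
                E (wick q (t.eraseIdx j)))
              ≤ |q| ^ (j : ℕ) * C ^ t.length := by
          intro j
          rw [WickAux.mn_smul]
          have hc : ‖(q : ℂ) ^ (j : ℕ) * (if a = t.get j then (1:ℂ) else 0)‖ ≤ |q| ^ (j : ℕ) := by
            rw [norm_mul, norm_pow, Complex.norm_real, Real.norm_eq_abs]
            have : ‖(if a = t.get j then (1:ℂ) else 0)‖ ≤ 1 := by
              split_ifs <;> simp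
            nlinarith [pow_nonneg (abs_nonneg q) (j : ℕ), norm_nonneg
              (if a = t.get j then (1:ℂ) else 0)]
          have hψ : WickAux.mn ρ (E (wick q (t.eraseIdx j))) ≤ C ^ t.length := by
            rw [← coeffNorm_eq]
            have hl : (t.eraseIdx (j : ℕ)).length ≤ t.length := by
              rw [List.length_eraseIdx]
              split <;> omega
            exact le_trans (hIH _ hl) (pow_le_pow_right₀ hC1 hl)
          exact mul_le_mul hc hψ (WickAux.mn_nonneg hρ _) (pow_nonneg (abs_nonneg q) _)
        refine le_trans (Finset.sum_le_sum fun j _ => hterm j) ?_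
        rw [← Finset.sum_mul]
        refine mul_le_mul_of_nonneg_right ?_ (pow_nonneg hC0 _)
        rw [Fin.sum_univ_eq_sum_range (fun i => |q| ^ i) t.length]
        exact WickAux.geom_bound (abs_nonneg q) hq t.length
      have hfinal : ρ * C ^ t.length + (1 / (1 - |q|)) * C ^ t.length ≤ C ^ (t.length + 1) := by
        rw [pow_succ, hCdef]
        have h12 : (1 : ℝ) / (1 - |q|) ≤ 2 / (1 - |q|) := by
          rw [div_le_div_iff₀ h1q h1q]; nlinarith
        nlinarith [pow_nonneg hC0 t.length]
      linarith
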